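/- arXiv:1808.04060 — 3 statements merged into one kernel-verified Lean document; each statement's English description precedes it below -/
import Mathlib

section
/- Let q ≥ 2, k ≥ 3, and c > 0 with c·k(k−1) < (q^{k−1}−1)^2. Define f(ρ) = −∑_{i,j=1}^q ρ_{ij} ln ρ_{ij} + c ln(1 − 2q^{1−k} + ∑_{i,j} ρ_{ij}^k) on q×q matrices with positive entries summing to 1 whose row sums and column sums all equal 1/q. Then ρ̄ (all entries 1/q²) is a strict local maximum of f restricted to this affine set; more precisely, the Hessian quadratic form of f at ρ̄ restricted to directions ε with all row and column sums zero equals −q²(1 − ck(k−1)/(q^{k−1}−1)^2)·‖ε‖₂², which is negative definite. -/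
/-!
Along the line `ρ̄ + t ε`, `f` is built from the entrywise functions `x log x` and `x ^ k`
composed with affine maps, and `c log` of a function `G` with `G(0) = (1 - q^{1-k})²`, so
the second-order chain rule computes `f''(0)`. The zero row sums make
`G'(0) = k q^{2-2k} ∑ ε = 0`, so the term `-c G'(0)² / G(0)²` drops out and only the
entrywise second derivatives survive: `-q² ‖ε‖²` from the entropy and
`c k (k-1) q^{4-2k} ‖ε‖² / G(0) = c k (k-1) q² ‖ε‖² / (q^{k-1} - 1)²` from the energy.
-/

open Filter Topology Finset

def HasSecondDerivAt (f : ℝ → ℝ) (f₁ f₂ x : ℝ) : Prop :=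
  ∃ f' : ℝ → ℝ, (∀ᶠ t in 𝓝 x, HasDerivAt f (f' t) t) ∧ f' x = f₁ ∧ HasDerivAt f' f₂ x

namespace HasSecondDerivAt

variable {f g : ℝ → ℝ} {f₁ f₂ g₁ g₂ x : ℝ}

theorem deriv_deriv (h : HasSecondDerivAt f f₁ f₂ x) : deriv (deriv f) x = f₂ := by
  obtain ⟨f', hf', -, hf''⟩ := h
  rw [EventuallyEq.deriv_eq (hf'.mono fun t ht => ht.deriv), hf''.deriv]

theorem add (hf : HasSecondDerivAt f f₁ f₂ x) (hg : HasSecondDerivAt g g₁ g₂ x) :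
    HasSecondDerivAt (fun t => f t + g t) (f₁ + g₁) (f₂ + g₂) x := by
  obtain ⟨f', hf', rfl, hf''⟩ := hf
  obtain ⟨g', hg', rfl, hg''⟩ := hg
  exact ⟨fun t => f' t + g' t, (hf'.and hg').mono fun t ht => ht.1.add ht.2, rfl, hf''.add hg''⟩

theorem const_mul (c : ℝ) (hf : HasSecondDerivAt f f₁ f₂ x) :
    HasSecondDerivAt (fun t => c * f t) (c * f₁) (c * f₂) x := by
  obtain ⟨f', hf', rfl, hf''⟩ := hf
  exact ⟨fun t => c * f' t, hf'.mono fun t ht => ht.const_mul c, rfl, hf''.const_mul c⟩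

theorem neg (hf : HasSecondDerivAt f f₁ f₂ x) :
    HasSecondDerivAt (fun t => -f t) (-f₁) (-f₂) x := by
  simpa using hf.const_mul (-1)

theorem const_add (c : ℝ) (hf : HasSecondDerivAt f f₁ f₂ x) :
    HasSecondDerivAt (fun t => c + f t) f₁ f₂ x := by
  obtain ⟨f', hf', rfl, hf''⟩ := hf
  exact ⟨f', hf'.mono fun t ht => ht.const_add c, rfl, hf''⟩

theorem sum {ι : Type*} (s : Finset ι) {f : ι → ℝ → ℝ} {f₁ f₂ : ι → ℝ}
    (h : ∀ i ∈ s, HasSecondDerivAt (f i) (f₁ i) (f₂ i) x) :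
    HasSecondDerivAt (fun t => ∑ i ∈ s, f i t) (∑ i ∈ s, f₁ i) (∑ i ∈ s, f₂ i) x := by
  induction s using Finset.cons_induction with
  | empty => exact ⟨fun _ => 0, .of_forall fun _ => hasDerivAt_const _ _, rfl, hasDerivAt_const _ _⟩
  | cons i s hi ih =>
    simp only [Finset.sum_cons]
    exact (h i (mem_cons_self i s)).add (ih fun j hj => h j (mem_cons_of_mem hj))

theorem comp {y : ℝ} (hg : HasSecondDerivAt g g₁ g₂ x) (hy : g x = y)
    (hf : HasSecondDerivAt f f₁ f₂ y) :
    HasSecondDerivAt (fun t => f (g t)) (f₁ * g₁) (f₂ * g₁ ^ 2 + f₁ * g₂) x := by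
  obtain ⟨g', hg', rfl, hg''⟩ := hg
  obtain ⟨f', hf', rfl, hf''⟩ := hf
  subst hy
  have hf'g : ∀ᶠ t in 𝓝 x, HasDerivAt f (f' (g t)) (g t) :=
    hg'.self_of_nhds.continuousAt.eventually hf'
  refine ⟨fun t => f' (g t) * g' t, (hf'g.and hg').mono fun t ht => ht.1.comp t ht.2, rfl, ?_⟩
  exact ((hf''.comp x hg'.self_of_nhds).fun_mul hg'').congr_deriv (by simp only [Function.comp]; ring)

end HasSecondDerivAt

theorem hasSecondDerivAt_affine (a e t : ℝ) : HasSecondDerivAt (fun t => a + t * e) e 0 t :=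
  ⟨fun _ => e, .of_forall fun s => by simpa using ((hasDerivAt_id s).mul_const e).const_add a,
    rfl, hasDerivAt_const _ _⟩

theorem hasSecondDerivAt_pow (n : ℕ) (x : ℝ) :
    HasSecondDerivAt (fun x => x ^ n) (n * x ^ (n - 1)) (n * (n - 1 : ℕ) * x ^ (n - 2)) x :=
  ⟨fun x => n * x ^ (n - 1), .of_forall fun x => hasDerivAt_pow n x, rfl, 
    ((hasDerivAt_pow (n - 1) x).const_mul (n : ℝ)).congr_deriv (by rw [Nat.sub_sub, mul_assoc])⟩

theorem hasSecondDerivAt_log {x : ℝ} (hx : x ≠ 0) :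
    HasSecondDerivAt Real.log x⁻¹ (-(x ^ 2)⁻¹) x :=
  ⟨fun x => x⁻¹, (isOpen_ne.eventually_mem hx).mono fun _ => Real.hasDerivAt_log, rfl,
    hasDerivAt_inv hx⟩

theorem hasSecondDerivAt_mul_log {x : ℝ} (hx : x ≠ 0) :
    HasSecondDerivAt (fun x => x * Real.log x) (Real.log x + 1) x⁻¹ x :=
  ⟨fun x => Real.log x + 1, (isOpen_ne.eventually_mem hx).mono fun _ => Real.hasDerivAt_mul_log,
    rfl, (Real.hasDerivAt_log hx).add_const 1⟩

theorem HasSecondDerivAt.comp_affine {φ : ℝ → ℝ} {a φ₁ φ₂ : ℝ} (h : HasSecondDerivAt φ φ₁ φ₂ a)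
    (e : ℝ) : HasSecondDerivAt (fun t => φ (a + t * e)) (φ₁ * e) (φ₂ * e ^ 2) 0 := by
  simpa using (hasSecondDerivAt_affine a e 0).comp (by simp) h

theorem one_sub_two_zpow_add_sq_mul_inv_pow {x : ℝ} (hx : x ≠ 0) {k : ℕ} (hk : 1 ≤ k) :
    1 - 2 * x ^ ((1 : ℤ) - k) + x ^ 2 * ((x ^ 2)⁻¹) ^ k = (1 - (x ^ (k - 1))⁻¹) ^ 2 := by
  obtain ⟨m, rfl⟩ := Nat.exists_eq_add_of_le hk
  rw [show (1 : ℤ) - ↑(1 + m) = -↑m by push_cast; ring, zpow_neg, zpow_natCast]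
  simp only [Nat.add_sub_cancel_left, inv_pow, ← pow_mul]
  field_simp
  ring

theorem inv_sq_pow_div_one_sub_inv_pow_sq {x : ℝ} (hx : x ≠ 0) {k : ℕ} (hk : 2 ≤ k)
    (hxk : x ^ (k - 1) ≠ 1) :
    ((x ^ 2)⁻¹) ^ (k - 2) / (1 - (x ^ (k - 1))⁻¹) ^ 2 = x ^ 2 / (x ^ (k - 1) - 1) ^ 2 := by
  obtain ⟨m, rfl⟩ := Nat.exists_eq_add_of_le hk
  have hxm : x ^ (m + 1) - 1 ≠ 0 := sub_ne_zero.mpr (by simpa [add_comm] using hxk)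
  simp only [show 2 + m - 1 = m + 1 by omega, Nat.add_sub_cancel_left, inv_pow, ← pow_mul]
  field_simp
  ring

theorem sum_sum_sq_pos {ι κ : Type*} [Fintype ι] [Fintype κ] {ε : ι → κ → ℝ} (hε : ε ≠ 0) :
    0 < ∑ i, ∑ j, ε i j ^ 2 := by
  obtain ⟨i, j, hij⟩ : ∃ i j, ε i j ≠ 0 := by
    by_contra! h
    exact hε (funext fun i => funext (h i))
  exact sum_pos' (fun i _ => sum_nonneg fun j _ => sq_nonneg _)
    ⟨i, mem_univ i, sum_pos' (fun j _ => sq_nonneg _) ⟨j, mem_univ j, by positivity⟩⟩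

theorem stmt_5_general (q k : ℕ) (hq : 2 ≤ q) (hk : 3 ≤ k) (c : ℝ)
    (hcond : c * k * (k - 1) < ((q : ℝ) ^ (k - 1) - 1) ^ 2)
    (ε : Fin q → Fin q → ℝ)
    (hrow : ∀ i, ∑ j, ε i j = 0) :
    let f : ℝ → ℝ := fun t =>
      (-∑ i : Fin q, ∑ j : Fin q,
          (((q : ℝ) ^ 2)⁻¹ + t * ε i j) * Real.log (((q : ℝ) ^ 2)⁻¹ + t * ε i j))
        + c * Real.log (1 - 2 * (q : ℝ) ^ ((1 : ℤ) - k)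
            + ∑ i : Fin q, ∑ j : Fin q, (((q : ℝ) ^ 2)⁻¹ + t * ε i j) ^ k)
    deriv (deriv f) 0
        = -(q : ℝ) ^ 2 * (1 - c * k * (k - 1) / ((q : ℝ) ^ (k - 1) - 1) ^ 2) *
            (∑ i : Fin q, ∑ j : Fin q, (ε i j) ^ 2)
      ∧ (ε ≠ 0 → deriv (deriv f) 0 < 0) := by
  intro f
  have hq1 : (1 : ℝ) < q := by exact_mod_cast hq
  have hq0 : (q : ℝ) ≠ 0 := by positivity
  have hP1 : 1 < (q : ℝ) ^ (k - 1) := one_lt_pow₀ hq1 (by omega)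
  set a : ℝ := ((q : ℝ) ^ 2)⁻¹ with ha
  have hH := HasSecondDerivAt.sum univ fun i _ => HasSecondDerivAt.sum univ fun j _ =>
    (hasSecondDerivAt_mul_log (x := a) (by positivity)).comp_affine (ε i j)
  have hG := (HasSecondDerivAt.sum univ fun i _ => HasSecondDerivAt.sum univ fun j _ =>
    (hasSecondDerivAt_pow k a).comp_affine (ε i j)).const_add (1 - 2 * (q : ℝ) ^ ((1 : ℤ) - k))
  have hG0 : 1 - 2 * (q : ℝ) ^ ((1 : ℤ) - k) + ∑ i : Fin q, ∑ j : Fin q, (a + 0 * ε i j) ^ k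
      = (1 - ((q : ℝ) ^ (k - 1))⁻¹) ^ 2 := by
    simp only [zero_mul, add_zero, sum_const, card_univ, Fintype.card_fin, nsmul_eq_mul]
    rw [← one_sub_two_zpow_add_sq_mul_inv_pow hq0 (by omega : 1 ≤ k)]
    ring
  have hf := hH.neg.add ((hG.comp hG0 (hasSecondDerivAt_log
    (pow_ne_zero 2 (sub_ne_zero.mpr (inv_lt_one_of_one_lt₀ hP1).ne')))).const_mul c)
  have hG1 : ∑ i : Fin q, ∑ j : Fin q, k * a ^ (k - 1) * ε i j = 0 := by
    simp [← mul_sum, hrow]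
  have hd2 : deriv (deriv f) 0
      = -(q : ℝ) ^ 2 * (1 - c * k * (k - 1) / ((q : ℝ) ^ (k - 1) - 1) ^ 2) *
            (∑ i : Fin q, ∑ j : Fin q, (ε i j) ^ 2) := by
    rw [hf.deriv_deriv, hG1]
    have hratio := inv_sq_pow_div_one_sub_inv_pow_sq hq0 (by omega : 2 ≤ k) hP1.ne'
    simp only [← mul_sum, ha, inv_inv, Nat.cast_sub (by omega : 1 ≤ k), Nat.cast_one]
    linear_combination (c * k * (k - 1) * ∑ i : Fin q, ∑ j : Fin q, ε i j ^ 2) * hratio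
  refine ⟨hd2, fun hne => hd2 ▸ mul_neg_of_neg_of_pos ?_ (sum_sum_sq_pos hne)⟩
  have hlt : c * k * (k - 1) / ((q : ℝ) ^ (k - 1) - 1) ^ 2 < 1 :=
    (div_lt_one (by nlinarith)).mpr hcond
  have hpos := mul_pos (by positivity : (0 : ℝ) < q ^ 2) (sub_pos.mpr hlt)
  linarith

/-- The Hessian quadratic form of `f = H + E` at the uniform overlap matrix `ρ̄`,
in a direction `ε` with vanishing row and column sums, equals
`-q²(1 - ck(k-1)/(q^{k-1}-1)²)‖ε‖₂²`, which is negative for `ε ≠ 0`: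
so `ρ̄` is a strict local maximum of `f` on the doubly balanced affine set. -/
theorem stmt_5 (q k : ℕ) (hq : 2 ≤ q) (hk : 3 ≤ k) (c : ℝ) (hc : 0 < c)
    (hcond : c * k * (k - 1) < ((q : ℝ) ^ (k - 1) - 1) ^ 2)
    (ε : Fin q → Fin q → ℝ)
    (hrow : ∀ i, ∑ j, ε i j = 0) (hcol : ∀ j, ∑ i, ε i j = 0) :
    let f : ℝ → ℝ := fun t =>
      (-∑ i : Fin q, ∑ j : Fin q,
          (((q : ℝ) ^ 2)⁻¹ + t * ε i j) * Real.log (((q : ℝ) ^ 2)⁻¹ + t * ε i j))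
        + c * Real.log (1 - 2 * (q : ℝ) ^ ((1 : ℤ) - k)
            + ∑ i : Fin q, ∑ j : Fin q, (((q : ℝ) ^ 2)⁻¹ + t * ε i j) ^ k)
    deriv (deriv f) 0
        = -(q : ℝ) ^ 2 * (1 - c * k * (k - 1) / ((q : ℝ) ^ (k - 1) - 1) ^ 2) *
            (∑ i : Fin q, ∑ j : Fin q, (ε i j) ^ 2)
      ∧ (ε ≠ 0 → deriv (deriv f) 0 < 0) :=
  stmt_5_general q k hq hk c hcond ε hrow
end

section
/- Let g(z) be defined implicitly near z = 1 by z = 1 + (q−1)/q^{k z^{1−k}} for integers q,k → ∞ appropriately. Starting from z_0 = 1, the iterates satisfy z_1 = 1 + (q−1)/q^k and z_2 = 1 + q^{1−k} − q^{−k} + O_q(q^{2−2k} ln q). -/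
open Filter

lemma my_exp_sub_one_le3 {x : ℝ} (h0 : 0 ≤ x) (h1 : x ≤ 1) : Real.exp x - 1 ≤ 3 * x := by
  have h2 := Real.add_one_le_exp (-x)
  have h3 : Real.exp (-x) * Real.exp x = 1 := by rw [← Real.exp_add]; simp
  have hpos : 0 < Real.exp x := Real.exp_pos x
  have h5 : Real.exp x ≤ 3 := (Real.exp_le_exp.mpr h1).trans
    (by have := Real.exp_one_lt_d9; linarith)
  nlinarith [mul_le_mul_of_nonneg_right h2 hpos.le]

set_option maxHeartbeats 1000000 in
/-- The fixed-point iteration `z ↦ 1 + (q-1)/q^{k z^{1-k}}` started at `z₀ = 1` satisfies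
`z₁ = 1 + (q-1)/q^k` and `z₂ = 1 + q^{1-k} - q^{-k} + O(q^{2-2k} ln q)` as `q → ∞`. -/
theorem stmt_17 (k : ℕ) (hk : 2 ≤ k) :
    (∀ q : ℕ, 2 ≤ q →
        (fun z : ℝ => 1 + ((q : ℝ) - 1) / (q : ℝ) ^ ((k : ℝ) * z ^ (1 - (k : ℝ)))) 1
          = 1 + ((q : ℝ) - 1) / (q : ℝ) ^ (k : ℕ))
    ∧ (fun q : ℕ =>
          (fun z : ℝ => 1 + ((q : ℝ) - 1) / (q : ℝ) ^ ((k : ℝ) * z ^ (1 - (k : ℝ))))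
              ((fun z : ℝ => 1 + ((q : ℝ) - 1) / (q : ℝ) ^ ((k : ℝ) * z ^ (1 - (k : ℝ)))) 1)
            - (1 + (q : ℝ) ^ ((1 : ℤ) - k) - (q : ℝ) ^ (-(k : ℤ))))
        =O[atTop] (fun q : ℕ => (q : ℝ) ^ ((2 : ℤ) - 2 * k) * Real.log q) := by
  constructor
  · intro q hq
    show 1 + ((q : ℝ) - 1) / (q : ℝ) ^ ((k : ℝ) * (1:ℝ) ^ (1 - (k : ℝ))) = _
    rw [Real.one_rpow, mul_one, Real.rpow_natCast]
  · rw [Asymptotics.isBigO_iff]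
    refine ⟨9 * (k:ℝ)^2, ?_⟩
    filter_upwards [eventually_ge_atTop (36 * k^4 + 2)] with q hq
    have hk2 : (2:ℝ) ≤ (k:ℝ) := by exact_mod_cast hk
    set Q : ℝ := (q:ℝ) with hQdef
    have hQk4 : 36 * (k:ℝ)^4 + 2 ≤ Q := by
      rw [hQdef]; exact_mod_cast hq
    clear_value Q
    have hkk : 2 * (k:ℝ) ≤ (k:ℝ)^2 := by nlinarith
    have hk4 : (k:ℝ)^2 ≤ (k:ℝ)^4 := by nlinarith
    have hQ2 : (2:ℝ) ≤ Q := by nlinarith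
    have hQ1 : (1:ℝ) < Q := by linarith
    have hQ0 : (0:ℝ) < Q := by linarith
    set L := Real.log Q with hLdef
    have hL0 : 0 < L := by rw [hLdef]; exact Real.log_pos hQ1
    clear_value L
    have hQkpos : (0:ℝ) < Q ^ k := pow_pos hQ0 k
    set ε : ℝ := (Q - 1) / Q ^ k with hεdef
    have hε0 : 0 ≤ ε := by rw [hεdef]; exact div_nonneg (by linarith) hQkpos.le
    clear_value ε
    have hQsq : Q ^ 2 ≤ Q ^ k := pow_le_pow_right₀ hQ1.le hk
    have hεQ : ε * Q ≤ 1 := by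
      rw [hεdef, div_mul_eq_mul_div, div_le_one hQkpos]
      nlinarith
    have hkQ : (k:ℝ) ≤ Q := by nlinarith
    set z₁ : ℝ := 1 + ε with hz₁def
    have hz1 : 1 ≤ z₁ := by rw [hz₁def]; linarith
    clear_value z₁
    have f1 : 1 + (Q - 1) / Q ^ ((k:ℝ) * (1:ℝ) ^ (1 - (k:ℝ))) = z₁ := by
      rw [Real.one_rpow, mul_one, Real.rpow_natCast, hz₁def, hεdef]
    set A : ℝ := z₁ ^ ((k:ℝ) - 1) with hAdef
    have hA1 : 1 ≤ A := by rw [hAdef]; exact Real.one_le_rpow hz1 (by linarith)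
    clear_value A
    have hApos : 0 < A := lt_of_lt_of_le one_pos hA1
    set u : ℝ := A⁻¹ with hudef
    have hu : z₁ ^ (1 - (k:ℝ)) = u := by
      rw [hudef, hAdef, ← Real.rpow_neg (by linarith : (0:ℝ) ≤ z₁)]
      norm_num
    have hu1 : u ≤ 1 := by rw [hudef]; exact inv_le_one_of_one_le₀ hA1
    have hu0 : 0 < u := by rw [hudef]; exact inv_pos.mpr hApos
    clear_value u
    have hs0 : 0 ≤ ((k:ℝ) - 1) * ε := mul_nonneg (by linarith) hε0
    have hs1 : ((k:ℝ) - 1) * ε ≤ 1 := by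
      nlinarith [mul_le_mul_of_nonneg_right hkQ hε0]
    have hAexp : A ≤ Real.exp (((k:ℝ) - 1) * ε) := by
      have h1 : z₁ ≤ Real.exp ε := by have := Real.add_one_le_exp ε; linarith
      rw [hAdef]
      calc z₁ ^ ((k:ℝ) - 1) ≤ (Real.exp ε) ^ ((k:ℝ) - 1) :=
            Real.rpow_le_rpow (by linarith) h1 (by linarith)
        _ = Real.exp (ε * ((k:ℝ) - 1)) := by
            rw [Real.rpow_def_of_pos (Real.exp_pos ε), Real.log_exp]
        _ = Real.exp (((k:ℝ) - 1) * ε) := by rw [mul_comm]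
    have hA3 : A - 1 ≤ 3 * (((k:ℝ) - 1) * ε) := by
      have := my_exp_sub_one_le3 hs0 hs1; linarith
    have h1u : 1 - u ≤ 3 * (((k:ℝ) - 1) * ε) := by
      have e1 : 1 - u = (A - 1) / A := by rw [hudef]; field_simp
      have e2 : (A - 1) / A ≤ A - 1 := by
        rw [div_le_iff₀ hApos]; nlinarith
      linarith
    have hL2 : L ≤ 2 * Real.sqrt Q := by
      have h1 : Real.log (Real.sqrt Q) ≤ Real.sqrt Q - 1 :=
        Real.log_le_sub_one_of_pos (Real.sqrt_pos.mpr hQ0)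
      have h2 : Real.log (Real.sqrt Q) = L / 2 := by
        rw [hLdef]; exact Real.log_sqrt hQ0.le
      rw [h2] at h1; linarith
    have hsq : 6 * (k:ℝ)^2 ≤ Real.sqrt Q := by
      rw [Real.le_sqrt (by positivity) hQ0.le]
      have h36 : (6 * (k:ℝ)^2)^2 = 36 * (k:ℝ)^4 := by ring
      linarith
    have hsqQ : Real.sqrt Q * Real.sqrt Q = Q := Real.mul_self_sqrt hQ0.le
    have ht0 : 0 ≤ (k:ℝ) * (1 - u) * L :=
      mul_nonneg (mul_nonneg (by linarith) (by linarith)) hL0.le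
    have ht1 : (k:ℝ) * (1 - u) * L ≤ 1 := by
      have b1 : (k:ℝ) * (1 - u) * L ≤ (k:ℝ) * (3 * (((k:ℝ) - 1) * ε)) * L := by
        apply mul_le_mul_of_nonneg_right _ hL0.le
        exact mul_le_mul_of_nonneg_left h1u (by linarith)
      have b2 : (k:ℝ) * (3 * (((k:ℝ) - 1) * ε)) * L ≤ 3 * (k:ℝ)^2 * (ε * L) := by
        have hb : 0 ≤ (k:ℝ) * ε * L :=
          mul_nonneg (mul_nonneg (by linarith) hε0) hL0.le
        linarith [hb]
      have b3 : ε * L ≤ (1 / Q) * L := by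
        apply mul_le_mul_of_nonneg_right _ hL0.le
        rw [le_div_iff₀ hQ0]; linarith [hεQ]
      have b4 : 3 * (k:ℝ)^2 * L ≤ Q := by
        have c1 : 3 * (k:ℝ)^2 * L ≤ 3 * (k:ℝ)^2 * (2 * Real.sqrt Q) :=
          mul_le_mul_of_nonneg_left hL2 (by positivity)
        have c2 : 6 * (k:ℝ)^2 * Real.sqrt Q ≤ Real.sqrt Q * Real.sqrt Q :=
          mul_le_mul_of_nonneg_right hsq (Real.sqrt_nonneg Q)
        linarith [c1, c2, hsqQ]
      have b5 : 3 * (k:ℝ)^2 * ((1/Q) * L) ≤ 1 := by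
        rw [show 3 * (k:ℝ)^2 * ((1/Q) * L) = (3 * (k:ℝ)^2 * L) / Q by ring,
          div_le_one hQ0]
        exact b4
      calc (k:ℝ) * (1 - u) * L ≤ 3 * (k:ℝ)^2 * (ε * L) := b1.trans b2
        _ ≤ 3 * (k:ℝ)^2 * ((1/Q) * L) := mul_le_mul_of_nonneg_left b3 (by positivity)
        _ ≤ 1 := b5
    have hpowk : Q ^ k = Real.exp ((k:ℝ) * L) := by
      rw [← Real.rpow_natCast Q k, Real.rpow_def_of_pos hQ0, mul_comm, hLdef]
    have hpowku : Q ^ ((k:ℝ) * u) = Real.exp ((k:ℝ) * u * L) := by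
      rw [Real.rpow_def_of_pos hQ0, mul_comm, hLdef]
    have hexpb : Real.exp ((k:ℝ) * (1 - u) * L) - 1 ≤ 3 * ((k:ℝ) * (1 - u) * L) :=
      my_exp_sub_one_le3 ht0 ht1
    set D : ℝ := (Q - 1) / Q ^ ((k:ℝ) * u) - (Q - 1) / Q ^ k with hDdef
    clear_value D
    have hlhs : 1 + (Q - 1) / Q ^ ((k:ℝ) * z₁ ^ (1 - (k:ℝ)))
        - (1 + Q ^ ((1:ℤ) - k) - Q ^ (-(k:ℤ))) = D := by
      have hT : Q ^ ((1:ℤ) - k) - Q ^ (-(k:ℤ)) = (Q - 1) / Q ^ k := by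
        rw [zpow_sub₀ hQ0.ne', zpow_one, zpow_neg, zpow_natCast,
          ← one_div, div_sub_div_same]
      rw [hu, hDdef]
      linarith [hT]
    have hD0 : 0 ≤ D := by
      rw [hDdef]
      have h1 : Q ^ ((k:ℝ) * u) ≤ Q ^ k := by
        rw [← Real.rpow_natCast Q k]
        apply Real.rpow_le_rpow_of_exponent_le hQ1.le
        nlinarith
      have h2 : 0 < Q ^ ((k:ℝ) * u) := Real.rpow_pos_of_pos hQ0 _
      have h3 : (Q - 1) / Q ^ k ≤ (Q - 1) / Q ^ ((k:ℝ) * u) := by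
        gcongr
      linarith
    have key : Real.exp (-((k:ℝ) * u * L))
        = Real.exp (-((k:ℝ) * L)) * Real.exp ((k:ℝ) * (1 - u) * L) := by
      rw [← Real.exp_add]; congr 1; ring
    have e1 : D = (Q - 1) * Real.exp (-((k:ℝ) * L)) * (Real.exp ((k:ℝ) * (1 - u) * L) - 1) := by
      rw [hDdef, hpowk, hpowku, div_eq_mul_inv, div_eq_mul_inv,
        ← Real.exp_neg, ← Real.exp_neg, key]
      ring
    have e2 : Real.exp (-((k:ℝ) * L)) = (Q ^ k)⁻¹ := by
      rw [hpowk, Real.exp_neg]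
    have e3 : Real.exp ((k:ℝ) * (1 - u) * L) - 1
        ≤ 3 * ((k:ℝ) * (3 * (((k:ℝ) - 1) * ε)) * L) := by
      have h4 : (k:ℝ) * (1 - u) * L ≤ (k:ℝ) * (3 * (((k:ℝ) - 1) * ε)) * L := by
        apply mul_le_mul_of_nonneg_right _ hL0.le
        exact mul_le_mul_of_nonneg_left h1u (by linarith)
      linarith [hexpb]
    have hDb : D ≤ 9 * (k:ℝ)^2 * ((Q - 1)^2 / (Q ^ k)^2 * L) := by
      calc D = (Q - 1) * (Q ^ k)⁻¹ * (Real.exp ((k:ℝ) * (1 - u) * L) - 1) := by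
            rw [e1, e2]
        _ ≤ (Q - 1) * (Q ^ k)⁻¹ * (3 * ((k:ℝ) * (3 * (((k:ℝ) - 1) * ε)) * L)) :=
            mul_le_mul_of_nonneg_left e3 (mul_nonneg (by linarith) (by positivity))
        _ = 9 * ((k:ℝ) * ((k:ℝ) - 1)) * ((Q - 1)^2 / (Q ^ k)^2 * L) := by
            rw [hεdef]; field_simp; ring
        _ ≤ 9 * (k:ℝ)^2 * ((Q - 1)^2 / (Q ^ k)^2 * L) := by
            apply mul_le_mul_of_nonneg_right _ (by positivity)
            linarith [hk2]
    have hR : Q ^ ((2:ℤ) - 2 * (k:ℤ)) = Q ^ 2 / (Q ^ k) ^ 2 := by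
      rw [zpow_sub₀ hQ0.ne', show ((2:ℤ) * k) = ((2 * k : ℕ) : ℤ) by push_cast; ring,
        zpow_natCast, pow_mul', zpow_two]
      ring
    rw [f1, hlhs, Real.norm_eq_abs, Real.norm_eq_abs]
    have hrhs : |Q ^ ((2:ℤ) - 2 * (k:ℤ)) * L| = Q ^ 2 / (Q ^ k) ^ 2 * L := by
      rw [abs_of_nonneg, hR]
      rw [hR]; positivity
    rw [abs_of_nonneg hD0, hrhs]
    calc D ≤ 9 * (k:ℝ)^2 * ((Q - 1)^2 / (Q ^ k)^2 * L) := hDb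
      _ ≤ 9 * (k:ℝ)^2 * (Q ^ 2 / (Q ^ k)^2 * L) := by
          gcongr <;> linarith
end

section
/- For real c > 0 and integers q ≥ 2, k ≥ 3, the expected number of labelled copies of configurations on ℓ vertices containing two intersecting loose cycles in a random k-uniform multihypergraph with cn edges is O(1/n); concretely, C(n,ℓ)·(cn·C(ℓ,k)/C(n,k))^{(ℓ+1)/(k−1)} = O(1/n) for each fixed ℓ ≥ k. -/
/-!
Since `n.choose k ≥ n ^ k / (2 ^ k * k!)` once `n ≥ 2k`, the base of the power is
`O(n ^ (1 - k))`. Raising it to `(ℓ + 1) / (k - 1)` gives `O(n ^ (-(ℓ + 1)))`, and the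
factor `n.choose ℓ ≤ n ^ ℓ` leaves `O(1 / n)`.
-/

open Filter Asymptotics Nat

theorem Nat.pow_le_two_pow_mul_descFactorial {n k : ℕ} (h : 2 * k ≤ n) :
    n ^ k ≤ 2 ^ k * n.descFactorial k :=
  calc n ^ k ≤ (2 * (n + 1 - k)) ^ k := Nat.pow_le_pow_left (by omega) k
    _ = 2 ^ k * (n + 1 - k) ^ k := mul_pow ..
    _ ≤ 2 ^ k * n.descFactorial k := Nat.mul_le_mul_left _ (Nat.pow_sub_le_descFactorial n k)

theorem abs_mul_natCast_div_choose_le {n k : ℕ} (h : 2 * k ≤ n) (hn : 0 < n) (x : ℝ) :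
    |x * n / n.choose k| ≤ 2 ^ k * k ! * |x| / (n : ℝ) ^ ((k : ℝ) - 1) := by
  have hn' : (0 : ℝ) < n := by exact_mod_cast hn
  have hchoose : (0 : ℝ) < n.choose k := by exact_mod_cast Nat.choose_pos (by omega)
  have hpow : (n : ℝ) ^ k ≤ 2 ^ k * k ! * n.choose k := by
    have := Nat.pow_le_two_pow_mul_descFactorial h
    rw [Nat.descFactorial_eq_factorial_mul_choose, ← mul_assoc] at this
    exact_mod_cast this
  have hsplit : (n : ℝ) ^ k = (n : ℝ) ^ ((k : ℝ) - 1) * n := by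
    rw [Real.rpow_sub_one hn'.ne', Real.rpow_natCast, div_mul_cancel₀ _ (by positivity)]
  rw [abs_div, abs_mul, Nat.abs_cast, Nat.abs_cast,
    div_le_div_iff₀ hchoose (by positivity)]
  calc |x| * n * (n : ℝ) ^ ((k : ℝ) - 1) = |x| * (n : ℝ) ^ k := by rw [hsplit]; ring
    _ ≤ |x| * (2 ^ k * k ! * n.choose k) := by gcongr
    _ = 2 ^ k * k ! * |x| * n.choose k := by ring

theorem stmt_19_general (k ℓ : ℕ) (hk : 3 ≤ k)
    (c : ℝ) :
    (fun n : ℕ =>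
        (n.choose ℓ : ℝ) *
          (c * n * (ℓ.choose k : ℝ) / (n.choose k : ℝ)) ^ (((ℓ : ℝ) + 1) / ((k : ℝ) - 1)))
      =O[atTop] (fun n : ℕ => 1 / (n : ℝ)) := by
  set e : ℝ := ((ℓ : ℝ) + 1) / ((k : ℝ) - 1)
  set A : ℝ := 2 ^ k * k ! * |c * ℓ.choose k|
  have hk1 : (0 : ℝ) < (k : ℝ) - 1 := by
    have : (3 : ℝ) ≤ k := by exact_mod_cast hk
    linarith
  refine isBigO_iff.2 ⟨A ^ e, ?_⟩
  filter_upwards [eventually_ge_atTop (2 * k + 1)] with n hn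
  have hn' : (0 : ℝ) < n := by exact_mod_cast (show 0 < n by omega)
  have hbase := abs_mul_natCast_div_choose_le (by omega : 2 * k ≤ n) (by omega) (c * ℓ.choose k)
  rw [show c * ℓ.choose k * n = c * n * ℓ.choose k by ring] at hbase
  have hexp : ((n : ℝ) ^ ((k : ℝ) - 1)) ^ e = (n : ℝ) ^ ((ℓ : ℝ) + 1) := by
    rw [← Real.rpow_mul hn'.le, mul_div_cancel₀ _ hk1.ne']
  calc ‖(n.choose ℓ : ℝ) * (c * n * ℓ.choose k / n.choose k) ^ e‖
      ≤ (n : ℝ) ^ ℓ * (A / (n : ℝ) ^ ((k : ℝ) - 1)) ^ e := by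
        rw [Real.norm_eq_abs, abs_mul, Nat.abs_cast]
        gcongr
        · exact_mod_cast Nat.choose_le_pow n ℓ
        -- the base may be negative, where `Real.rpow` is still bounded by the power of `|·|`
        · exact (Real.abs_rpow_le_abs_rpow _ _).trans (by gcongr)
    _ = A ^ e * ‖1 / (n : ℝ)‖ := by
        rw [Real.div_rpow (by positivity) (by positivity), hexp, Real.rpow_add_one hn'.ne',
          Real.rpow_natCast, norm_div, norm_one, Real.norm_of_nonneg hn'.le]
        field_simp

theorem stmt_19 (q k ℓ : ℕ) (hq : 2 ≤ q) (hk : 3 ≤ k) (hℓ : k ≤ ℓ)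
    (c : ℝ) (hc : 0 < c) :
    (fun n : ℕ =>
        (n.choose ℓ : ℝ) *
          (c * n * (ℓ.choose k : ℝ) / (n.choose k : ℝ)) ^ (((ℓ : ℝ) + 1) / ((k : ℝ) - 1)))
      =O[atTop] (fun n : ℕ => 1 / (n : ℝ)) :=
  stmt_19_general k ℓ hk c
end
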